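/- (Closed form of the prior cross-entropy term for diagonal Gaussian posteriors.) For ν ∈ ℝ^H, τ ∈ (0,∞)^H and λ ∈ (0,∞)^H, the integral of the log of a factorized Laplace density against a factorized Gaussian density satisfies ∫_{ℝ^H} ( Π_{h=1}^H N(z_h | ν_h, τ_h²) ) · log( Π_{h=1}^H (1/(2λ_h))·exp(−|z_h|/λ_h) ) dz = −Σ_{h=1}^H [ log(2λ_h) + (τ_h/λ_h)·M(ν_h/τ_h) ]. -/

import Mathlib

open MeasureTheory Real

/-- The error function `erf x = (2/sqrt pi) * integral_0^x exp(-t^2) dt`. -/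
noncomputable def erf (x : ℝ) : ℝ :=
  (2 / Real.sqrt Real.pi) * ∫ t in (0:ℝ)..x, Real.exp (-t ^ 2)

/-- `M a = sqrt (2/pi) * exp (-a^2/2) + a * erf (a/sqrt 2)`. -/
noncomputable def Mfun (a : ℝ) : ℝ :=
  Real.sqrt (2 / Real.pi) * Real.exp (-a ^ 2 / 2) + a * erf (a / Real.sqrt 2)

/-- One-dimensional Gaussian density `N(z | nu, s^2) = (2*pi*s^2)^(-1/2) * exp(-(z-nu)^2/(2*s^2))`. -/
noncomputable def gaussPdf (ν σ z : ℝ) : ℝ :=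
  (Real.sqrt (2 * Real.pi * σ ^ 2))⁻¹ * Real.exp (-(z - ν) ^ 2 / (2 * σ ^ 2))

open Filter

lemma hasDerivAt_erf (x : ℝ) : HasDerivAt erf (2 / Real.sqrt Real.pi * Real.exp (-x ^ 2)) x := by
  have hc : Continuous fun t : ℝ => Real.exp (-t ^ 2) := by continuity
  have := (intervalIntegral.integral_hasDerivAt_right
    ((hc.intervalIntegrable 0 x))
    (hc.aestronglyMeasurable.stronglyMeasurableAtFilter)
    hc.continuousAt)
  exact this.const_mul (2 / Real.sqrt Real.pi)

lemma tendsto_erf_atTop : Tendsto erf atTop (nhds 1) := by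
  have hi : IntegrableOn (fun t : ℝ => Real.exp (-t ^ 2)) (Set.Ioi 0) := by
    simpa using (integrable_exp_neg_mul_sq (b := 1) one_pos).integrableOn
  have h := intervalIntegral_tendsto_integral_Ioi 0 hi tendsto_id
  have h2 : (∫ t in Set.Ioi (0:ℝ), Real.exp (-t ^ 2)) = Real.sqrt Real.pi / 2 := by
    simpa using integral_gaussian_Ioi 1
  have := h.const_mul (2 / Real.sqrt Real.pi)
  rw [h2] at this
  have hπ : Real.sqrt Real.pi ≠ 0 := by positivity
  convert this using 2
  · rfl
  · field_simp

lemma tendsto_erf_atBot : Tendsto erf atBot (nhds (-1)) := by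
  have hi : IntegrableOn (fun t : ℝ => Real.exp (-t ^ 2)) (Set.Iic 0) := by
    simpa using (integrable_exp_neg_mul_sq (b := 1) one_pos).integrableOn
  have h := intervalIntegral_tendsto_integral_Iic 0 hi tendsto_id
  have h2 : (∫ t in Set.Iic (0:ℝ), Real.exp (-t ^ 2)) = Real.sqrt Real.pi / 2 := by
    have : (∫ t in Set.Iic (0:ℝ), Real.exp (-t ^ 2))
        = ∫ t in Set.Ioi (0:ℝ), Real.exp (-(-t) ^ 2) := by
      rw [show Set.Iic (0:ℝ) = Set.Iic (-(0:ℝ)) by norm_num, ← integral_comp_neg_Ioi]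
    rw [this]
    simpa using integral_gaussian_Ioi 1
  have h3 : Tendsto (fun y : ℝ => ∫ t in (0:ℝ)..y, Real.exp (-t ^ 2)) atBot
      (nhds (- (Real.sqrt Real.pi / 2))) := by
    have : ∀ y : ℝ, (∫ t in (0:ℝ)..y, Real.exp (-t ^ 2))
        = - ∫ t in y..(0:ℝ), Real.exp (-t ^ 2) := fun y =>
      (intervalIntegral.integral_symm _ _)
    simp_rw [this, h2] at h ⊢
    exact h.neg
  have := h3.const_mul (2 / Real.sqrt Real.pi)
  have hπ : Real.sqrt Real.pi ≠ 0 := by positivity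
  convert this using 2
  · rfl
  · field_simp

section gauss
variable {ν τ : ℝ} (hτ : 0 < τ)

lemma gaussPdf_eq' (z : ℝ) :
    gaussPdf ν τ z = (Real.sqrt (2 * Real.pi * τ ^ 2))⁻¹ *
      Real.exp (-((2 * τ ^ 2)⁻¹) * (z - ν) ^ 2) := by
  have h : -(z - ν) ^ 2 / (2 * τ ^ 2) = -((2 * τ ^ 2)⁻¹) * (z - ν) ^ 2 := by ring
  rw [gaussPdf, h]

lemma gaussPdf_nonneg (z : ℝ) : 0 ≤ gaussPdf ν τ z := by
  rw [gaussPdf]; positivity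

include hτ

lemma integrable_gaussPdf : Integrable (gaussPdf ν τ) := by
  have hb : (0:ℝ) < (2 * τ ^ 2)⁻¹ := by positivity
  have h := ((integrable_exp_neg_mul_sq hb).comp_sub_right ν).const_mul
    ((Real.sqrt (2 * Real.pi * τ ^ 2))⁻¹)
  exact h.congr (by
    filter_upwards with z
    rw [gaussPdf_eq'])

lemma integrable_mul_gaussPdf : Integrable (fun z => z * gaussPdf ν τ z) := by
  have hb : (0:ℝ) < (2 * τ ^ 2)⁻¹ := by positivity
  have h1 := ((integrable_mul_exp_neg_mul_sq hb).comp_sub_right ν).const_mul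
    ((Real.sqrt (2 * Real.pi * τ ^ 2))⁻¹)
  have h2 := (integrable_gaussPdf (ν := ν) hτ).const_mul ν
  refine (h1.add h2).congr ?_
  filter_upwards with z
  simp only [Pi.add_apply, gaussPdf_eq']
  ring

lemma integrable_abs_mul_gaussPdf : Integrable (fun z => gaussPdf ν τ z * |z|) := by
  refine (integrable_mul_gaussPdf (ν := ν) hτ).abs.congr ?_
  filter_upwards with z
  rw [abs_mul, abs_of_nonneg (gaussPdf_nonneg z)]
  ring

lemma hasDerivAt_gaussPdf (z : ℝ) :
    HasDerivAt (gaussPdf ν τ) (-(z - ν) / τ ^ 2 * gaussPdf ν τ z) z := by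
  have h1 : HasDerivAt (fun z : ℝ => -(z - ν) ^ 2 / (2 * τ ^ 2))
      (-(z - ν) / τ ^ 2) z := by
    have : HasDerivAt (fun z : ℝ => z - ν) 1 z := (hasDerivAt_id z).sub_const ν
    have h2 := ((this.pow 2).neg).div_const (2 * τ ^ 2)
    refine h2.congr_deriv ?_
    field_simp
    ring
  have := (h1.exp).const_mul ((Real.sqrt (2 * Real.pi * τ ^ 2))⁻¹)
  refine this.congr_deriv ?_
  rw [gaussPdf]
  ring

lemma tendsto_gaussPdf_atTop : Tendsto (gaussPdf ν τ) atTop (nhds 0) := by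
  have h1 : Tendsto (fun z : ℝ => -(z - ν) ^ 2 / (2 * τ ^ 2)) atTop atBot := by
    apply Tendsto.atBot_div_const (by positivity)
    apply tendsto_neg_atBot_iff.mpr
    exact (tendsto_pow_atTop two_ne_zero).comp (tendsto_atTop_add_const_right _ (-ν) tendsto_id)
  have := (Real.tendsto_exp_atBot.comp h1).const_mul ((Real.sqrt (2 * Real.pi * τ ^ 2))⁻¹)
  rw [mul_zero] at this
  exact this

lemma tendsto_gaussPdf_atBot : Tendsto (gaussPdf ν τ) atBot (nhds 0) := by
  have h1 : Tendsto (fun z : ℝ => -(z - ν) ^ 2 / (2 * τ ^ 2)) atBot atBot := by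
    apply Tendsto.atBot_div_const (by positivity)
    apply tendsto_neg_atBot_iff.mpr
    have habs : Tendsto (fun z : ℝ => |z - ν|) atBot atTop :=
      tendsto_abs_atBot_atTop.comp (tendsto_atBot_add_const_right _ (-ν) tendsto_id)
    have := (tendsto_pow_atTop two_ne_zero).comp habs
    refine this.congr fun z => ?_
    simp [Function.comp, sq_abs]
  have := (Real.tendsto_exp_atBot.comp h1).const_mul ((Real.sqrt (2 * Real.pi * τ ^ 2))⁻¹)
  rw [mul_zero] at this
  exact this

end gauss

section gauss2
variable {ν τ : ℝ} (hτ : 0 < τ)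
include hτ

lemma integral_gaussPdf : ∫ z, gaussPdf ν τ z = 1 := by
  have hv : (⟨τ ^ 2, sq_nonneg τ⟩ : NNReal) ≠ 0 := by
    simp only [ne_eq, ← NNReal.coe_injective.eq_iff, NNReal.coe_zero, NNReal.coe_mk]
    exact fun h => pow_ne_zero 2 hτ.ne' (congrArg Subtype.val h)
  have h := ProbabilityTheory.integral_gaussianPDFReal_eq_one ν hv
  rw [← h]
  congr 1

lemma sqrt_const_eq : Real.sqrt (2 * Real.pi * τ ^ 2) = Real.sqrt 2 * Real.sqrt Real.pi * τ := by
  rw [Real.sqrt_mul (by positivity), Real.sqrt_mul (by norm_num : (0:ℝ) ≤ 2), Real.sqrt_sq hτ.le]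

lemma hasDerivAt_F (x : ℝ) :
    HasDerivAt (fun x => (1/2) * erf ((x - ν) / (τ * Real.sqrt 2))) (gaussPdf ν τ x) x := by
  have hu : HasDerivAt (fun x : ℝ => (x - ν) / (τ * Real.sqrt 2)) ((τ * Real.sqrt 2)⁻¹) x := by
    simpa [div_eq_mul_inv] using ((hasDerivAt_id x).sub_const ν).div_const (τ * Real.sqrt 2)
  have h := ((hasDerivAt_erf (((x - ν) / (τ * Real.sqrt 2)))).comp x hu).const_mul (1/2 : ℝ)
  refine h.congr_deriv ?_
  have h2 : ((x - ν) / (τ * Real.sqrt 2)) ^ 2 = (x - ν) ^ 2 / (2 * τ ^ 2) := by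
    rw [div_pow, mul_pow, Real.sq_sqrt (by norm_num : (0:ℝ) ≤ 2)]
    ring
  rw [gaussPdf, sqrt_const_eq hτ, neg_div, ← h2]
  have hs2 : Real.sqrt 2 ≠ 0 := by positivity
  have hsπ : Real.sqrt Real.pi ≠ 0 := by positivity
  field_simp

lemma tendsto_F_atTop :
    Tendsto (fun x => (1/2) * erf ((x - ν) / (τ * Real.sqrt 2))) atTop (nhds (1/2)) := by
  have hu : Tendsto (fun x : ℝ => (x - ν) / (τ * Real.sqrt 2)) atTop atTop := by
    apply Tendsto.atTop_div_const (by positivity)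
    exact tendsto_atTop_add_const_right _ (-ν) tendsto_id
  have := (tendsto_erf_atTop.comp hu).const_mul (1/2 : ℝ)
  simpa using this

lemma tendsto_F_atBot :
    Tendsto (fun x => (1/2) * erf ((x - ν) / (τ * Real.sqrt 2))) atBot (nhds (-(1/2))) := by
  have hu : Tendsto (fun x : ℝ => (x - ν) / (τ * Real.sqrt 2)) atBot atBot := by
    apply Tendsto.atBot_div_const (by positivity)
    exact tendsto_atBot_add_const_right _ (-ν) tendsto_id
  have := (tendsto_erf_atBot.comp hu).const_mul (1/2 : ℝ)
  convert this using 1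
  all_goals simp [Function.comp]

end gauss2

lemma erf_neg (x : ℝ) : erf (-x) = - erf x := by
  have h : ∀ t : ℝ, Real.exp (-t ^ 2) = Real.exp (-(-t) ^ 2) := by intro t; rw [neg_pow]; ring_nf
  have key : (∫ t in (0:ℝ)..(-x), Real.exp (-t ^ 2)) = - ∫ t in (0:ℝ)..x, Real.exp (-t ^ 2) := by
    rw [intervalIntegral.integral_congr (g := fun t => Real.exp (-(-t) ^ 2)) (fun t _ => h t),
      intervalIntegral.integral_comp_neg (fun t => Real.exp (-t ^ 2))]
    rw [intervalIntegral.integral_symm]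
    norm_num
  rw [erf, erf, key, mul_neg]

section gauss3
variable {ν τ : ℝ} (hτ : 0 < τ)
include hτ

lemma integral_abs_gaussPdf :
    ∫ z, gaussPdf ν τ z * |z| = τ * Mfun (ν / τ) := by
  set F : ℝ → ℝ := fun x => (1/2) * erf ((x - ν) / (τ * Real.sqrt 2)) with hF
  set G : ℝ → ℝ := fun x => -τ^2 * gaussPdf ν τ x + ν * F x with hG
  have hτ2 : (τ:ℝ) ≠ 0 := hτ.ne'
  have hGd : ∀ x, HasDerivAt G (x * gaussPdf ν τ x) x := by
    intro x
    have h1 := (hasDerivAt_gaussPdf hτ (ν := ν) x).const_mul (-τ^2)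
    have h2 := (hasDerivAt_F hτ (ν := ν) x).const_mul ν
    have h3 := h1.add h2
    refine h3.congr_deriv ?_
    field_simp
    ring
  have htop : Tendsto G atTop (nhds (ν * (1/2))) := by
    have h := ((tendsto_gaussPdf_atTop hτ (ν := ν)).const_mul (-τ^2)).add
      ((tendsto_F_atTop hτ (ν := ν)).const_mul ν)
    rw [show ν * (1/2) = -τ^2 * 0 + ν * (1/2) by ring]
    exact h
  have hbot : Tendsto G atBot (nhds (ν * (-(1/2)))) := by
    have h := ((tendsto_gaussPdf_atBot hτ (ν := ν)).const_mul (-τ^2)).add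
      ((tendsto_F_atBot hτ (ν := ν)).const_mul ν)
    rw [show ν * (-(1/2)) = -τ^2 * 0 + ν * (-(1/2)) by ring]
    exact h
  have hint : Integrable (fun z => z * gaussPdf ν τ z) := integrable_mul_gaussPdf hτ
  have hIoi : ∫ z in Set.Ioi (0:ℝ), z * gaussPdf ν τ z = ν * (1/2) - G 0 :=
    integral_Ioi_of_hasDerivAt_of_tendsto ((hGd 0).continuousAt.continuousWithinAt)
      (fun x _ => hGd x) hint.integrableOn htop
  have hIic : ∫ z in Set.Iic (0:ℝ), z * gaussPdf ν τ z = G 0 - ν * (-(1/2)) :=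
    integral_Iic_of_hasDerivAt_of_tendsto ((hGd 0).continuousAt.continuousWithinAt)
      (fun x _ => hGd x) hint.integrableOn hbot
  have habs : Integrable (fun z => gaussPdf ν τ z * |z|) := integrable_abs_mul_gaussPdf hτ
  rw [← intervalIntegral.integral_Iic_add_Ioi (b := (0:ℝ)) habs.integrableOn habs.integrableOn]
  have e1 : ∫ z in Set.Iic (0:ℝ), gaussPdf ν τ z * |z|
      = - ∫ z in Set.Iic (0:ℝ), z * gaussPdf ν τ z := by
    rw [← integral_neg]
    refine setIntegral_congr_fun measurableSet_Iic (fun z hz => ?_)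
    rw [abs_of_nonpos hz]; ring
  have e2 : ∫ z in Set.Ioi (0:ℝ), gaussPdf ν τ z * |z|
      = ∫ z in Set.Ioi (0:ℝ), z * gaussPdf ν τ z := by
    refine setIntegral_congr_fun measurableSet_Ioi (fun z hz => ?_)
    rw [abs_of_pos hz]; ring
  rw [e1, e2, hIic, hIoi]
  have harg : ((0:ℝ) - ν) / (τ * Real.sqrt 2) = -(ν / (τ * Real.sqrt 2)) := by ring
  have hG0 : G 0 = -τ^2 * gaussPdf ν τ 0 + ν * ((1/2) * (- erf (ν / (τ * Real.sqrt 2)))) := by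
    simp only [hG, hF]
    rw [harg, erf_neg]
  rw [hG0]
  rw [Mfun, show (ν / τ) / Real.sqrt 2 = ν / (τ * Real.sqrt 2) from div_div _ _ _]
  rw [gaussPdf, sqrt_const_eq hτ]
  have hexp : -((0:ℝ) - ν) ^ 2 / (2 * τ ^ 2) = -(ν / τ) ^ 2 / 2 := by
    ring
  rw [hexp]
  rw [show Real.sqrt (2 / Real.pi) = Real.sqrt 2 / Real.sqrt Real.pi from
    Real.sqrt_div (by norm_num) _]
  have hs2 : Real.sqrt 2 ≠ 0 := by positivity
  have hsπ : Real.sqrt Real.pi ≠ 0 := by positivity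
  have h22 : Real.sqrt 2 * Real.sqrt 2 = 2 := Real.mul_self_sqrt (by norm_num)
  field_simp
  ring_nf
  rw [show (Real.sqrt 2) ^ 2 = 2 by
    rw [Real.sq_sqrt (by norm_num : (0:ℝ) ≤ 2)]]
  ring
end gauss3

section oneD
variable {ν τ lam : ℝ} (hτ : 0 < τ) (hlam : 0 < lam)
include hτ hlam

omit hτ in
lemma log_laplace_eq (z : ℝ) :
    Real.log (1 / (2 * lam) * Real.exp (-|z| / lam))
      = -Real.log (2 * lam) + -(1 / lam) * |z| := by
  rw [Real.log_mul (by positivity) (Real.exp_ne_zero _), Real.log_exp, one_div,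
    Real.log_inv]
  ring

lemma integrable_gauss_log_laplace :
    Integrable (fun z => gaussPdf ν τ z *
      Real.log (1 / (2 * lam) * Real.exp (-|z| / lam))) := by
  have h1 : Integrable (fun z => gaussPdf ν τ z * (-Real.log (2 * lam))) :=
    (integrable_gaussPdf hτ).mul_const _
  have h2 : Integrable (fun z => gaussPdf ν τ z * (-(1 / lam) * |z|)) := by
    have h := (integrable_abs_mul_gaussPdf hτ (ν := ν)).const_mul (-(1 / lam))
    exact h.congr (by filter_upwards with z; ring)
  refine (h1.add h2).congr ?_
  filter_upwards with z
  rw [log_laplace_eq hlam]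
  simp only [Pi.add_apply]
  ring

lemma integral_gauss_log_laplace_oneD :
    ∫ z, gaussPdf ν τ z * Real.log (1 / (2 * lam) * Real.exp (-|z| / lam))
      = -(Real.log (2 * lam) + (τ / lam) * Mfun (ν / τ)) := by
  have h1 : Integrable (fun z => gaussPdf ν τ z * (-Real.log (2 * lam))) :=
    (integrable_gaussPdf hτ).mul_const _
  have h2 : Integrable (fun z => gaussPdf ν τ z * (-(1 / lam) * |z|)) := by
    have h := (integrable_abs_mul_gaussPdf hτ (ν := ν)).const_mul (-(1 / lam))
    exact h.congr (by filter_upwards with z; ring)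
  have hre : (fun z => gaussPdf ν τ z * Real.log (1 / (2 * lam) * Real.exp (-|z| / lam)))
      = fun z => gaussPdf ν τ z * (-Real.log (2 * lam)) +
          gaussPdf ν τ z * (-(1 / lam) * |z|) := by
    funext z
    rw [log_laplace_eq hlam]
    ring
  rw [hre, integral_add h1 h2, integral_mul_const, integral_gaussPdf hτ]
  have h3 : ∫ z, gaussPdf ν τ z * (-(1 / lam) * |z|)
      = -(1 / lam) * ∫ z, gaussPdf ν τ z * |z| := by
    rw [← integral_const_mul]
    congr 1 with z
    ring
  rw [h3, integral_abs_gaussPdf hτ]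
  field_simp
  ring

end oneD

/-- **Closed form of the prior cross-entropy term for diagonal Gaussian posteriors.**
The integral of the log of a factorized Laplace density against a factorized Gaussian
density equals `-sum_h (log(2*lam_h) + (tau_h/lam_h) * M (nu_h/tau_h))`. -/
theorem integral_gauss_log_laplace
    (H : ℕ) (ν : Fin H → ℝ) (τ : Fin H → ℝ) (hτ : ∀ h, 0 < τ h)
    (lam : Fin H → ℝ) (hlam : ∀ h, 0 < lam h) :
    ∫ z : Fin H → ℝ,
        (∏ h, gaussPdf (ν h) (τ h) (z h)) *
          Real.log (∏ h, (1 / (2 * lam h)) * Real.exp (-|z h| / lam h)) =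
      -∑ h, (Real.log (2 * lam h) + (τ h / lam h) * Mfun (ν h / τ h)) := by
  have hlog : ∀ z : Fin H → ℝ,
      Real.log (∏ h, (1 / (2 * lam h)) * Real.exp (-|z h| / lam h))
        = ∑ h, Real.log ((1 / (2 * lam h)) * Real.exp (-|z h| / lam h)) := by
    intro z
    refine Real.log_prod (fun h _ => ?_)
    have := hlam h
    positivity
  have hre : (fun z : Fin H → ℝ =>
      (∏ h, gaussPdf (ν h) (τ h) (z h)) *
        Real.log (∏ h, (1 / (2 * lam h)) * Real.exp (-|z h| / lam h)))
      = fun z : Fin H → ℝ => ∑ h, ∏ k,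
          (gaussPdf (ν k) (τ k) (z k) *
            (if k = h then Real.log ((1 / (2 * lam k)) * Real.exp (-|z k| / lam k)) else 1)) := by
    funext z
    rw [hlog z, Finset.mul_sum]
    refine Finset.sum_congr rfl (fun h _ => ?_)
    rw [Finset.prod_mul_distrib, Finset.prod_ite_eq' Finset.univ h
      (fun k => Real.log ((1 / (2 * lam k)) * Real.exp (-|z k| / lam k)))]
    simp
  rw [hre]
  have hintk : ∀ h k : Fin H, Integrable (fun x : ℝ =>
      gaussPdf (ν k) (τ k) x *
        (if k = h then Real.log ((1 / (2 * lam k)) * Real.exp (-|x| / lam k)) else 1)) := by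
    intro h k
    by_cases hk : k = h
    · simpa [hk] using integrable_gauss_log_laplace (hτ k) (hlam k)
    · simpa [hk] using integrable_gaussPdf (ν := ν k) (hτ k)
  rw [integral_finset_sum _ (fun h _ => by exact (Integrable.fintype_prod (f := fun k x =>
      gaussPdf (ν k) (τ k) x *
        (if k = h then Real.log ((1 / (2 * lam k)) * Real.exp (-|x| / lam k)) else 1))
      (hintk h)))]
  rw [← Finset.sum_neg_distrib]
  refine Finset.sum_congr rfl (fun h _ => ?_)
  rw [integral_fintype_prod_volume_eq_prod (f := fun k x =>
      gaussPdf (ν k) (τ k) x *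
        (if k = h then Real.log ((1 / (2 * lam k)) * Real.exp (-|x| / lam k)) else 1))]
  have hone : ∀ k : Fin H, (∫ x : ℝ, gaussPdf (ν k) (τ k) x *
      (if k = h then Real.log ((1 / (2 * lam k)) * Real.exp (-|x| / lam k)) else 1))
      = if k = h then -(Real.log (2 * lam k) + (τ k / lam k) * Mfun (ν k / τ k)) else 1 := by
    intro k
    by_cases hk : k = h
    · simp only [hk, if_true]
      exact integral_gauss_log_laplace_oneD (hτ h) (hlam h)
    · simp only [hk, if_false, mul_one]
      exact integral_gaussPdf (hτ k)
  simp_rw [hone]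
  rw [Finset.prod_ite_eq' Finset.univ h
    (fun k => -(Real.log (2 * lam k) + (τ k / lam k) * Mfun (ν k / τ k)))]
  simp
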